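/- Let ℓ ∈ ℝ, m ∈ ℂ, and t > 0, and set a := ℓ/2 − im, ω := ℓ/2 + im. For any ξ ∈ ℝ³ and any C² function ψ : (0,∞) → ℂ⁴, the composition of the symbol Dirac operator D(t,∂_t,iξ) := iγ⁰ d/dt − t^{−ℓ}(ξ₁γ¹ + ξ₂γ² + ξ₃γ³) + i(3ℓ/(2t))γ⁰ − (m/t)I₄ with the complementary operator D^co(t,∂_t,iξ) := i t^{−ℓ/2} γ⁰ (t^{im}γ^U + t^{−im}γ^L) d/dt − t^{−3ℓ/2} (ξ₁γ¹ + ξ₂γ² + ξ₃γ³)(t^{im}γ^U + t^{−im}γ^L) satisfies, when applied to ψ: D(t,∂_t,iξ)[D^co(t,∂_t,iξ)ψ](t) = −(t^{−a}γ^U + t^{−ω}γ^L) [ ψ''(t) + t^{−2ℓ}|ξ|² ψ(t) + t^{−1}(ℓ I₄ + 2im γ⁰) ψ'(t) ]. -/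

import Mathlib

/-! Write `Q(t) = t^{im} γ^U + t^{-im} γ^L`, so that `D^co ψ = t^{-ℓ/2} (i γ⁰ Q ψ' - t^{-ℓ} (ξ·γ) Q ψ)`
and the prefactor `t^{-a} γ^U + t^{-ω} γ^L` on the right is `t^{-ℓ/2} Q(t)`. Since `γ^U, γ^L` are
the spectral projections of `γ⁰`, `Q` commutes with `γ⁰` and `Q' = (im/t) γ⁰ Q`. Together with the
Clifford relations `γ⁰γ⁰ = 1`, `γ⁰(ξ·γ) = -(ξ·γ)γ⁰`, `(ξ·γ)² = -|ξ|²` this brings every term of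
`D[D^co ψ]` into the form `c · Mψ''`, `c · Mψ'` or `c · Mψ` with `M` one of `Q`, `Qγ⁰`, `(ξ·γ)Q`,
`(ξ·γ)Qγ⁰`; comparing the coefficients `c` (where `t^{-kℓ/2} = (t^{-ℓ/2})^k`) finishes the proof,
the `(ξ·γ)`-terms cancelling in pairs. -/

noncomputable section
open Matrix Complex

def σ1 : Matrix (Fin 2) (Fin 2) ℂ := !![0, 1; 1, 0]
def σ2 : Matrix (Fin 2) (Fin 2) ℂ := !![0, -I; I, 0]
def σ3 : Matrix (Fin 2) (Fin 2) ℂ := !![1, 0; 0, -1]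

def blk (A B C D : Matrix (Fin 2) (Fin 2) ℂ) : Matrix (Fin 4) (Fin 4) ℂ :=
  (Matrix.reindex finSumFinEquiv finSumFinEquiv) (Matrix.fromBlocks A B C D)

def γ0 : Matrix (Fin 4) (Fin 4) ℂ := blk 1 0 0 (-1)
def γ1 : Matrix (Fin 4) (Fin 4) ℂ := blk 0 σ1 (-σ1) 0
def γ2 : Matrix (Fin 4) (Fin 4) ℂ := blk 0 σ2 (-σ2) 0
def γ3 : Matrix (Fin 4) (Fin 4) ℂ := blk 0 σ3 (-σ3) 0
def γU : Matrix (Fin 4) (Fin 4) ℂ := ((1 : ℂ)/2) • (1 + γ0)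
def γL : Matrix (Fin 4) (Fin 4) ℂ := ((1 : ℂ)/2) • (1 - γ0)

/-- Principal power t^z for t > 0. -/
def tp (t : ℝ) (z : ℂ) : ℂ := ((t : ℂ)) ^ z

/-- ξ·γ = ξ₁γ¹ + ξ₂γ² + ξ₃γ³. -/
def Γξ (ξ1 ξ2 ξ3 : ℝ) : Matrix (Fin 4) (Fin 4) ℂ :=
  (ξ1 : ℂ) • γ1 + (ξ2 : ℂ) • γ2 + (ξ3 : ℂ) • γ3

/-- t^{im} γ^U + t^{−im} γ^L. -/
def Qm (m : ℂ) (t : ℝ) : Matrix (Fin 4) (Fin 4) ℂ :=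
  tp t (I * m) • γU + tp t (-(I * m)) • γL

/-- The complementary symbol operator applied to ψ:
D^co ψ(t) = i t^{−ℓ/2} γ⁰(t^{im}γ^U + t^{−im}γ^L) ψ'(t)
 − t^{−3ℓ/2} (ξ·γ)(t^{im}γ^U + t^{−im}γ^L) ψ(t). -/
def Dco (ℓ : ℝ) (m : ℂ) (ξ1 ξ2 ξ3 : ℝ) (ψ : ℝ → Fin 4 → ℂ) : ℝ → Fin 4 → ℂ :=
  fun s =>
    (I * tp s (-((ℓ : ℂ) / 2))) • ((γ0 * Qm m s).mulVec (deriv ψ s))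
      - tp s (-(3 * (ℓ : ℂ) / 2)) • ((Γξ ξ1 ξ2 ξ3 * Qm m s).mulVec (ψ s))

lemma blk_mul (A B C D A' B' C' D' : Matrix (Fin 2) (Fin 2) ℂ) :
    blk A B C D * blk A' B' C' D' =
      blk (A * A' + B * C') (A * B' + B * D') (C * A' + D * C') (C * B' + D * D') := by
  simp [blk, submatrix_mul_equiv, fromBlocks_multiply]

lemma blk_smul (c : ℂ) (A B C D : Matrix (Fin 2) (Fin 2) ℂ) :
    c • blk A B C D = blk (c • A) (c • B) (c • C) (c • D) := by
  rw [blk, blk, ← fromBlocks_smul]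
  rfl

lemma blk_add (A B C D A' B' C' D' : Matrix (Fin 2) (Fin 2) ℂ) :
    blk A B C D + blk A' B' C' D' = blk (A + A') (B + B') (C + C') (D + D') := by
  rw [blk, blk, blk, ← fromBlocks_add]
  rfl

lemma blk_neg (A B C D : Matrix (Fin 2) (Fin 2) ℂ) :
    blk (-A) (-B) (-C) (-D) = -blk A B C D := by
  rw [blk, blk, ← fromBlocks_neg]
  rfl

lemma blk_one : blk 1 0 0 1 = 1 := by
  simp [blk, fromBlocks_one]

lemma blk_smul_one (c : ℂ) : blk (c • 1) 0 0 (c • 1) = c • 1 := by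
  rw [← blk_one, blk_smul, smul_zero]

def σξ (ξ1 ξ2 ξ3 : ℝ) : Matrix (Fin 2) (Fin 2) ℂ :=
  (ξ1 : ℂ) • σ1 + (ξ2 : ℂ) • σ2 + (ξ3 : ℂ) • σ3

lemma Γξ_eq_blk (ξ1 ξ2 ξ3 : ℝ) : Γξ ξ1 ξ2 ξ3 = blk 0 (σξ ξ1 ξ2 ξ3) (-σξ ξ1 ξ2 ξ3) 0 := by
  simp only [Γξ, γ1, γ2, γ3, σξ, blk_smul, blk_add]
  congr 1 <;> simp only [smul_zero, add_zero, smul_neg, neg_add]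

lemma σξ_mul_self (ξ1 ξ2 ξ3 : ℝ) :
    σξ ξ1 ξ2 ξ3 * σξ ξ1 ξ2 ξ3 = ((ξ1 ^ 2 + ξ2 ^ 2 + ξ3 ^ 2 : ℝ) : ℂ) • 1 := by
  ext i j
  fin_cases i <;> fin_cases j <;>
    simp [σξ, σ1, σ2, σ3, one_fin_two] <;> ring_nf <;> simp [I_sq]

lemma γ0_mul_self : γ0 * γ0 = 1 := by
  simp [γ0, blk_mul, blk_one]

lemma γ0_mul_blk_offDiag (S : Matrix (Fin 2) (Fin 2) ℂ) :
    γ0 * blk 0 S (-S) 0 = -(blk 0 S (-S) 0 * γ0) := by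
  simp [γ0, blk_mul, ← blk_neg]

lemma blk_offDiag_mul_self (S : Matrix (Fin 2) (Fin 2) ℂ) :
    blk 0 S (-S) 0 * blk 0 S (-S) 0 = -blk (S * S) 0 0 (S * S) := by
  simp [blk_mul, ← blk_neg]

lemma γ0_mul_Γξ (ξ1 ξ2 ξ3 : ℝ) : γ0 * Γξ ξ1 ξ2 ξ3 = -(Γξ ξ1 ξ2 ξ3 * γ0) := by
  rw [Γξ_eq_blk, γ0_mul_blk_offDiag]

lemma Γξ_mul_self (ξ1 ξ2 ξ3 : ℝ) :
    Γξ ξ1 ξ2 ξ3 * Γξ ξ1 ξ2 ξ3 = -(((ξ1 ^ 2 + ξ2 ^ 2 + ξ3 ^ 2 : ℝ) : ℂ) • 1) := by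
  rw [Γξ_eq_blk, blk_offDiag_mul_self, σξ_mul_self, blk_smul_one]

lemma commute_γ0_Qm (m : ℂ) (t : ℝ) : Commute γ0 (Qm m t) := by
  have hU : Commute γ0 γU := ((Commute.one_right _).add_right (Commute.refl _)).smul_right _
  have hL : Commute γ0 γL := ((Commute.one_right _).sub_right (Commute.refl _)).smul_right _
  exact (hU.smul_right _).add_right (hL.smul_right _)

lemma γU_mul_γ0 : γU * γ0 = γU := by
  rw [γU, smul_mul_assoc, add_mul, one_mul, γ0_mul_self, add_comm]

lemma γL_mul_γ0 : γL * γ0 = -γL := by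
  rw [γL, smul_mul_assoc, sub_mul, one_mul, γ0_mul_self, ← smul_neg, neg_sub]

section mulVec

variable (ξ1 ξ2 ξ3 : ℝ) (m : ℂ) (t : ℝ) (v : Fin 4 → ℂ)

lemma γ0_mulVec_γ0_mulVec : γ0 *ᵥ (γ0 *ᵥ v) = v := by
  rw [mulVec_mulVec, γ0_mul_self, one_mulVec]

lemma γ0_mulVec_Γξ_mulVec : γ0 *ᵥ (Γξ ξ1 ξ2 ξ3 *ᵥ v) = -(Γξ ξ1 ξ2 ξ3 *ᵥ (γ0 *ᵥ v)) := by
  rw [mulVec_mulVec, γ0_mul_Γξ, neg_mulVec, mulVec_mulVec]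

lemma Γξ_mulVec_Γξ_mulVec :
    Γξ ξ1 ξ2 ξ3 *ᵥ (Γξ ξ1 ξ2 ξ3 *ᵥ v) = -(((ξ1 ^ 2 + ξ2 ^ 2 + ξ3 ^ 2 : ℝ) : ℂ) • v) := by
  rw [mulVec_mulVec, Γξ_mul_self, neg_mulVec, smul_mulVec, one_mulVec]

lemma γ0_mulVec_Qm_mulVec : γ0 *ᵥ (Qm m t *ᵥ v) = Qm m t *ᵥ (γ0 *ᵥ v) := by
  rw [mulVec_mulVec, (commute_γ0_Qm m t).eq, mulVec_mulVec]

end mulVec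

lemma tp_add {t : ℝ} (ht : t ≠ 0) (z w : ℂ) : tp t (z + w) = tp t z * tp t w :=
  cpow_add _ _ (ofReal_ne_zero.mpr ht)

lemma tp_nat_mul (t : ℝ) (n : ℕ) (z : ℂ) : tp t (n * z) = tp t z ^ n :=
  cpow_nat_mul _ _ _

lemma hasDerivAt_tp {t : ℝ} (ht : 0 < t) (z : ℂ) :
    HasDerivAt (fun s => tp s z) (z * tp t z / t) t := by
  refine ((hasStrictDerivAt_cpow_const (ofReal_mem_slitPlane.mpr ht)).hasDerivAt.comp_ofReal
    (e := fun w : ℂ => w ^ z)).congr_deriv ?_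
  unfold tp
  rw [cpow_sub _ _ (ofReal_ne_zero.mpr ht.ne'), cpow_one, mul_div_assoc]

lemma HasDerivAt.mulVec {ι κ : Type*} [Fintype ι] [Fintype κ] (M : Matrix ι κ ℂ)
    {φ : ℝ → κ → ℂ} {φ' : κ → ℂ} {t : ℝ} (h : HasDerivAt φ φ' t) :
    HasDerivAt (fun s => M *ᵥ φ s) (M *ᵥ φ') t :=
  ((mulVecLin M).restrictScalars ℝ).toContinuousLinearMap.hasFDerivAt.comp_hasDerivAt t h

lemma hasDerivAt_Qm_mulVec {t : ℝ} (ht : 0 < t) (m : ℂ) {φ : ℝ → Fin 4 → ℂ}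
    {φ' : Fin 4 → ℂ} (hφ : HasDerivAt φ φ' t) :
    HasDerivAt (fun s => Qm m s *ᵥ φ s) (Qm m t *ᵥ (φ' + (I * m / t) • (γ0 *ᵥ φ t))) t := by
  have hU := (hasDerivAt_tp ht (I * m)).smul (hφ.mulVec γU)
  have hL := (hasDerivAt_tp ht (-(I * m))).smul (hφ.mulVec γL)
  simp only [Qm, add_mulVec, smul_mulVec]
  refine (hU.add hL).congr_deriv ?_
  simp only [mulVec_add, mulVec_smul, mulVec_mulVec, γU_mul_γ0, γL_mul_γ0, neg_mulVec]
  module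

lemma Dco_eq (ℓ : ℝ) (m : ℂ) (ξ1 ξ2 ξ3 : ℝ) (ψ : ℝ → Fin 4 → ℂ) :
    Dco ℓ m ξ1 ξ2 ξ3 ψ = fun s =>
      (I * tp s (-((ℓ : ℂ) / 2))) • (γ0 *ᵥ (Qm m s *ᵥ deriv ψ s))
        - tp s (-(3 * (ℓ : ℂ) / 2)) • (Γξ ξ1 ξ2 ξ3 *ᵥ (Qm m s *ᵥ ψ s)) := by
  funext s
  simp only [Dco, mulVec_mulVec]

lemma hasDerivAt_Dco (ℓ : ℝ) (m : ℂ) (ξ1 ξ2 ξ3 : ℝ) {ψ : ℝ → Fin 4 → ℂ} {t : ℝ} (ht : 0 < t)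
    (hψ : DifferentiableAt ℝ ψ t) (hψ' : DifferentiableAt ℝ (deriv ψ) t) :
    HasDerivAt (Dco ℓ m ξ1 ξ2 ξ3 ψ)
      ((I * tp t (-((ℓ : ℂ) / 2))) •
          (γ0 *ᵥ (Qm m t *ᵥ (deriv (deriv ψ) t + (I * m / t) • (γ0 *ᵥ deriv ψ t))))
        + (I * (-((ℓ : ℂ) / 2) * tp t (-((ℓ : ℂ) / 2)) / t)) • (γ0 *ᵥ (Qm m t *ᵥ deriv ψ t))
        - (tp t (-(3 * (ℓ : ℂ) / 2)) •
            (Γξ ξ1 ξ2 ξ3 *ᵥ (Qm m t *ᵥ (deriv ψ t + (I * m / t) • (γ0 *ᵥ ψ t))))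
          + (-(3 * (ℓ : ℂ) / 2) * tp t (-(3 * (ℓ : ℂ) / 2)) / t) •
            (Γξ ξ1 ξ2 ξ3 *ᵥ (Qm m t *ᵥ ψ t)))) t := by
  rw [Dco_eq]
  exact (((hasDerivAt_tp ht _).const_mul I).smul
      ((hasDerivAt_Qm_mulVec ht m hψ'.hasDerivAt).mulVec γ0)).sub
    ((hasDerivAt_tp ht _).smul ((hasDerivAt_Qm_mulVec ht m hψ.hasDerivAt).mulVec _))

lemma tp_smul_Qm {t : ℝ} (ht : t ≠ 0) (z m : ℂ) :
    tp t (-(z - I * m)) • γU + tp t (-(z + I * m)) • γL = tp t (-z) • Qm m t := by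
  rw [Qm, smul_add, smul_smul, smul_smul, ← tp_add ht, ← tp_add ht]
  ring_nf

/-- Composition of the symbol Dirac operator with its complementary operator:
D(t,∂_t,iξ)[D^co ψ](t) = −(t^{−a}γ^U + t^{−ω}γ^L)
 [ψ''(t) + t^{−2ℓ}|ξ|² ψ(t) + t^{−1}(ℓ I₄ + 2im γ⁰) ψ'(t)],
where a = ℓ/2 − im, ω = ℓ/2 + im. -/
theorem dirac_times_complementary
    (ℓ : ℝ) (m : ℂ) (t : ℝ) (ht : 0 < t) (ξ1 ξ2 ξ3 : ℝ)
    (ψ : ℝ → Fin 4 → ℂ)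
    (hψ : ∀ s : ℝ, 0 < s → DifferentiableAt ℝ ψ s)
    (hψ' : ∀ s : ℝ, 0 < s → DifferentiableAt ℝ (deriv ψ) s) :
    I • (γ0.mulVec (deriv (Dco ℓ m ξ1 ξ2 ξ3 ψ) t))
        - tp t (-(ℓ : ℂ)) • ((Γξ ξ1 ξ2 ξ3).mulVec (Dco ℓ m ξ1 ξ2 ξ3 ψ t))
        + (I * (3 * (ℓ : ℂ) / (2 * (t : ℂ)))) • (γ0.mulVec (Dco ℓ m ξ1 ξ2 ξ3 ψ t))
        - (m / (t : ℂ)) • Dco ℓ m ξ1 ξ2 ξ3 ψ t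
      = -((tp t (-((ℓ : ℂ) / 2 - I * m)) • γU + tp t (-((ℓ : ℂ) / 2 + I * m)) • γL).mulVec
          (deriv (deriv ψ) t
            + (tp t (-(2 * (ℓ : ℂ))) * ((ξ1 ^ 2 + ξ2 ^ 2 + ξ3 ^ 2 : ℝ) : ℂ)) • ψ t
            + ((t : ℂ))⁻¹ •
                (((ℓ : ℂ) • (1 : Matrix (Fin 4) (Fin 4) ℂ) + (2 * I * m) • γ0).mulVec
                  (deriv ψ t)))) := by
  rw [(hasDerivAt_Dco ℓ m ξ1 ξ2 ξ3 ht (hψ t ht) (hψ' t ht)).deriv, Dco_eq,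
    tp_smul_Qm ht.ne']
  simp only [mulVec_add, mulVec_sub, mulVec_smul, add_mulVec, smul_mulVec,
    one_mulVec, γ0_mulVec_γ0_mulVec, γ0_mulVec_Γξ_mulVec, Γξ_mulVec_Γξ_mulVec,
    γ0_mulVec_Qm_mulVec]
  rw [show -(ℓ : ℂ) = (2 : ℕ) * -((ℓ : ℂ) / 2) by push_cast; ring,
    show -(3 * (ℓ : ℂ) / 2) = (3 : ℕ) * -((ℓ : ℂ) / 2) by push_cast; ring,
    show -(2 * (ℓ : ℂ)) = (4 : ℕ) * -((ℓ : ℂ) / 2) by push_cast; ring,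
    tp_nat_mul, tp_nat_mul, tp_nat_mul]
  set A := tp t (-((ℓ : ℂ) / 2))
  match_scalars
  · linear_combination A * I_mul_I
  · linear_combination (A * I * m / t) * I_mul_I
  · linear_combination (ℓ * A / t) * I_mul_I
  · ring
  · linear_combination (A ^ 3 * m / t) * I_mul_I
  · ring
  · ring
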